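/- arXiv:2304.08685 — 5 statements merged into one kernel-verified Lean document; each statement's English description precedes it below -/
import Mathlib

section
/- Suppose for all x in the expanded set C_e, dh/dt along sample-and-hold trajectories satisfies ḣ ≥ −α(h(x)) − L_k λ (B_f + B_g B_k) T for any hold duration T ≤ T_s* where T_s* = d / ((B_f + B_g B_k) L_k λ). Then along such trajectories ḣ_e(x) ≥ −α_e(h_e(x)), where h_e(x) = h(x) − α⁻¹(−d) and α_e(r) = α(r + α⁻¹(−d)) + d. In particular the strong ISSf barrier condition holds on C_e. -/
/-- **Practical safety via set expansion.** If along sample-and-hold trajectories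
`ḣ ≥ -α(h(x)) - L_k λ (B_f + B_g B_k) T` for hold duration `T ≤ T_s* = d/((B_f+B_g B_k)L_k λ)`,
then `ḣ_e ≥ -α_e(h_e(x))` with `h_e(x) = h(x) - α⁻¹(-d)`, `α_e(r) = α(r + α⁻¹(-d)) + d`
(the strong ISSf barrier condition on the expanded set `C_e`). -/
theorem practical_safety_set_expansion {n : ℕ}
    (h : EuclideanSpace ℝ (Fin n) → ℝ)
    (x : ℝ → EuclideanSpace ℝ (Fin n)) (hdot : ℝ → ℝ)
    (α : ℝ → ℝ) (hmono : StrictMono α) (hbij : Function.Bijective α) (hα0 : α 0 = 0)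
    (Bf Bg Bk Lk lam d T : ℝ)
    (hBf : 0 < Bf) (hBg : 0 < Bg) (hBk : 0 < Bk) (hLk : 0 < Lk) (hlam : 0 < lam)
    (hd : 0 < d)
    (hT : T ≤ d / ((Bf + Bg * Bk) * Lk * lam))
    (hderiv : ∀ t, HasDerivAt (fun s => h (x s)) (hdot t) t)
    (hineq : ∀ t, hdot t ≥ -α (h (x t)) - Lk * lam * (Bf + Bg * Bk) * T) :
    let αinv := Function.invFun α
    let he : EuclideanSpace ℝ (Fin n) → ℝ := fun y => h y - αinv (-d)
    let αe : ℝ → ℝ := fun r => α (r + αinv (-d)) + d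
    ∀ t, hdot t ≥ -αe (he (x t)) := by
  intro αinv he αe t
  have hK : 0 < (Bf + Bg * Bk) * Lk * lam := by positivity
  have hTd : Lk * lam * (Bf + Bg * Bk) * T ≤ d := by
    have h2 : T * ((Bf + Bg * Bk) * Lk * lam) ≤ d := by
      calc T * ((Bf + Bg * Bk) * Lk * lam)
          ≤ (d / ((Bf + Bg * Bk) * Lk * lam)) * ((Bf + Bg * Bk) * Lk * lam) := by
            exact mul_le_mul_of_nonneg_right hT hK.le
        _ = d := div_mul_cancel₀ d hK.ne'
    linarith [h2]
  have hsimp : αe (he (x t)) = α (h (x t)) + d := by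
    simp only [αe, he, sub_add_cancel]
  rw [hsimp]
  have := hineq t
  linarith
end

section
/- (Robustness near the boundary) Assume: (i) ‖L_g h(y)‖ ≥ μ > 0 for all y ∈ ∂C; (ii) L_g h is Lipschitz on C with constant M; (iii) k satisfies the barrier condition ḣ(x,k(x)) ≥ −α(h(x)); and (iv) 0 < ε ≤ μ²/(4d) for some d > 0. Then the adjusted controller k_a(x) = k(x) + (1/ε)L_g h(x)ᵀ satisfies ḣ(x, k_a(x)) ≥ −(1+c)α(h(x)) + d for all c ≥ 0 and all x ∈ C within distance μ/(2M) of some boundary point y ∈ ∂C. -/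
open scoped RealInnerProductSpace

/-- **Robustness near the boundary (Lemma 3).** Under control authority on `∂C`, Lipschitz
`L_g h` on `C`, the barrier condition, and `0 < ε ≤ μ²/(4d)`, the adjusted controller
`k_a(x) = k(x) + (1/ε)L_g h(x)ᵀ` satisfies `ḣ(x,k_a(x)) ≥ -(1+c)α(h(x)) + d` for all
`c ≥ 0` and all `x ∈ C` within distance `μ/(2M)` of a boundary point. -/
theorem robustness_near_boundary {n m : ℕ}
    (h : EuclideanSpace ℝ (Fin n) → ℝ)
    (Lfh : EuclideanSpace ℝ (Fin n) → ℝ)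
    (Lgh : EuclideanSpace ℝ (Fin n) → EuclideanSpace ℝ (Fin m))
    (k : EuclideanSpace ℝ (Fin n) → EuclideanSpace ℝ (Fin m))
    (α : ℝ → ℝ) (hαmono : StrictMono α) (hα0 : α 0 = 0)
    (μ M d ε : ℝ) (hμ : 0 < μ) (hM : 0 < M) (hd : 0 < d)
    (hε : 0 < ε) (hεle : ε ≤ μ^2 / (4 * d))
    (hbdry : ∀ y, h y = 0 → μ ≤ ‖Lgh y‖)
    (hLip : ∀ a b, 0 ≤ h a → 0 ≤ h b → ‖Lgh a - Lgh b‖ ≤ M * ‖a - b‖)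
    (hbarrier : ∀ x, Lfh x + ⟪Lgh x, k x⟫ ≥ -α (h x)) :
    ∀ c, 0 ≤ c → ∀ x y, 0 ≤ h x → h y = 0 → ‖x - y‖ ≤ μ / (2 * M) →
      Lfh x + ⟪Lgh x, k x + (1/ε) • Lgh x⟫ ≥ -((1 + c) * α (h x)) + d := by
  intro c hc x y hx hy hxy
  have hLx : μ / 2 ≤ ‖Lgh x‖ := by
    have h1 : μ ≤ ‖Lgh y‖ := hbdry y hy
    have h2 : ‖Lgh x - Lgh y‖ ≤ M * ‖x - y‖ := hLip x y hx (le_of_eq hy.symm)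
    have h3 : M * ‖x - y‖ ≤ μ / 2 := by
      have := mul_le_mul_of_nonneg_left hxy (le_of_lt hM)
      calc M * ‖x - y‖ ≤ M * (μ / (2 * M)) := this
        _ = μ / 2 := by field_simp
    have h4 : ‖Lgh y‖ - ‖Lgh x‖ ≤ ‖Lgh x - Lgh y‖ := by
      have := norm_sub_norm_le (Lgh y) (Lgh x)
      rwa [norm_sub_rev] at this
    linarith
  have hsq : (μ/2)^2 ≤ ‖Lgh x‖^2 := by
    apply sq_le_sq' <;> nlinarith [norm_nonneg (Lgh x)]
  have hdle : d ≤ (1/ε) * ‖Lgh x‖^2 := by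
    have h1ε : 4 * d / μ^2 ≤ 1/ε := by
      rw [div_le_div_iff₀ (by positivity) hε, one_mul]
      rw [le_div_iff₀ (by positivity)] at hεle
      nlinarith
    calc d = (4 * d / μ^2) * (μ/2)^2 := by field_simp; ring
      _ ≤ (1/ε) * ‖Lgh x‖^2 := by
          apply mul_le_mul h1ε hsq (by positivity) (by positivity)
  have hαx : 0 ≤ α (h x) := by
    rcases eq_or_lt_of_le hx with h0 | h0
    · rw [← h0, hα0]
    · have := hαmono h0
      rw [hα0] at this; linarith
  have hinner : ⟪Lgh x, k x + (1/ε) • Lgh x⟫ = ⟪Lgh x, k x⟫ + (1/ε) * ‖Lgh x‖^2 := by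
    rw [inner_add_right, real_inner_smul_right, real_inner_self_eq_norm_sq]
  have hb := hbarrier x
  rw [hinner]
  nlinarith
end

section
/- (sISSf condition for the tunable controller under sampling) Assume: k satisfies ḣ(x,k(x)) ≥ −α(h(x)); k is L_k-Lipschitz; ‖L_g h(x)‖ ≤ λ; L_g h is M-Lipschitz; σ is L_σ-Lipschitz with values in [0, 1/ε]; and the pointwise robustness bound −α(h(x)) + σ(h(x))‖L_g h(x)‖² ≥ −α'(h(x)) + d holds for all x ∈ C. Then for the held input u = k_T(x_i) = k(x_i) + σ(h(x_i))L_g h(x_i)ᵀ with e = x_i − x, it holds that ḣ(x, k_T(x_i)) ≥ −α'(h(x)) + d − λ(L_k + M/ε)‖e‖ − L_σ λ² ‖e‖. -/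
open scoped RealInnerProductSpace

/-- **sISSf condition for the tunable controller under sampling.** With `k` the barrier
controller, `k` `L_k`-Lipschitz, `‖L_g h‖ ≤ λ`, `L_g h` `M`-Lipschitz, `σ∘h`
`L_σ`-Lipschitz with values in `[0, 1/ε]`, and the pointwise robustness bound on `C`,
the held input `k_T(xᵢ) = k(xᵢ) + σ(h(xᵢ)) L_g h(xᵢ)ᵀ` with `e = xᵢ - x` satisfies
`ḣ(x,k_T(xᵢ)) ≥ -(1+c)α(h(x)) + d - λ(L_k + M/ε)‖e‖ - L_σ λ²‖e‖`. -/
theorem sISSf_tunable_sampled {n m : ℕ}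
    (h : EuclideanSpace ℝ (Fin n) → ℝ)
    (Lfh : EuclideanSpace ℝ (Fin n) → ℝ)
    (Lgh : EuclideanSpace ℝ (Fin n) → EuclideanSpace ℝ (Fin m))
    (k : EuclideanSpace ℝ (Fin n) → EuclideanSpace ℝ (Fin m))
    (σ : ℝ → ℝ) (α : ℝ → ℝ) (hαmono : StrictMono α) (hα0 : α 0 = 0)
    (Lk lam M Lσ ε c d : ℝ)
    (hLk : 0 ≤ Lk) (hlam : 0 ≤ lam) (hM : 0 ≤ M) (hLσ : 0 ≤ Lσ)
    (hε : 0 < ε) (hc : 0 ≤ c) (hd : 0 < d)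
    (hbarrier : ∀ x, Lfh x + ⟪Lgh x, k x⟫ ≥ -α (h x))
    (hkLip : ∀ a b, ‖k a - k b‖ ≤ Lk * ‖a - b‖)
    (hLghb : ∀ x, ‖Lgh x‖ ≤ lam)
    (hLghLip : ∀ a b, ‖Lgh a - Lgh b‖ ≤ M * ‖a - b‖)
    (hσLip : ∀ a b, |σ (h a) - σ (h b)| ≤ Lσ * ‖a - b‖)
    (hσrange : ∀ y, 0 ≤ σ (h y) ∧ σ (h y) ≤ 1/ε)
    (hrobust : ∀ x, 0 ≤ h x →
      -α (h x) + σ (h x) * ‖Lgh x‖^2 ≥ -((1 + c) * α (h x)) + d) :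
    ∀ x xi, 0 ≤ h x →
      Lfh x + ⟪Lgh x, k xi + σ (h xi) • Lgh xi⟫ ≥
        -((1 + c) * α (h x)) + d - lam * (Lk + M/ε) * ‖xi - x‖ - Lσ * lam^2 * ‖xi - x‖ := by
  intro x xi hx
  have key := hrobust x hx
  have A := hbarrier x
  have hne : (0:ℝ) ≤ ‖xi - x‖ := norm_nonneg _
  have h1 : |⟪Lgh x, k xi - k x⟫| ≤ lam * (Lk * ‖xi - x‖) := by
    refine (abs_real_inner_le_norm _ _).trans ?_
    exact mul_le_mul (hLghb x) (hkLip xi x) (norm_nonneg _) hlam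
  have h2 : |σ (h x) * ⟪Lgh x, Lgh xi - Lgh x⟫| ≤ (1/ε) * (lam * (M * ‖xi - x‖)) := by
    rw [abs_mul, abs_of_nonneg (hσrange x).1]
    refine mul_le_mul (hσrange x).2 ((abs_real_inner_le_norm _ _).trans ?_) (abs_nonneg _)
      (by positivity)
    exact mul_le_mul (hLghb x) (hLghLip xi x) (norm_nonneg _) hlam
  have h3 : |(σ (h xi) - σ (h x)) * ⟪Lgh x, Lgh xi⟫| ≤ (Lσ * ‖xi - x‖) * (lam * lam) := by
    rw [abs_mul]
    refine mul_le_mul (hσLip xi x) ((abs_real_inner_le_norm _ _).trans ?_) (abs_nonneg _)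
      (by positivity)
    exact mul_le_mul (hLghb x) (hLghb xi) (norm_nonneg _) hlam
  have hexp : ⟪Lgh x, k xi + σ (h xi) • Lgh xi⟫ =
      ⟪Lgh x, k x⟫ + ⟪Lgh x, k xi - k x⟫ + σ (h x) * ‖Lgh x‖^2
        + σ (h x) * ⟪Lgh x, Lgh xi - Lgh x⟫ + (σ (h xi) - σ (h x)) * ⟪Lgh x, Lgh xi⟫ := by
    simp only [inner_add_right, inner_sub_right, inner_smul_right,
      real_inner_self_eq_norm_sq]
    ring
  have b1 := neg_abs_le (⟪Lgh x, k xi - k x⟫)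
  have b2 := neg_abs_le (σ (h x) * ⟪Lgh x, Lgh xi - Lgh x⟫)
  have b3 := neg_abs_le ((σ (h xi) - σ (h x)) * ⟪Lgh x, Lgh xi⟫)
  have hεne : ε ≠ 0 := ne_of_gt hε
  rw [hexp]
  have hdiv : lam * (Lk + M/ε) * ‖xi - x‖ =
      lam * (Lk * ‖xi - x‖) + (1/ε) * (lam * (M * ‖xi - x‖)) := by
    field_simp
  nlinarith [h1, h2, h3, b1, b2, b3]
end

section
/- (Violation-free sampling time) Suppose along sample-and-hold trajectories with tunable controller k_T one has ḣ(x, k_T(x_i)) ≥ −α'(h(x)) + d − K‖e(t)‖, where K = L_σ λ² + (L_k + M/ε)λ, and ‖e(t)‖ ≤ E(t − t_i) with E = B_f + B_g B_k + (1/ε)B_g λ. Then with T_s* = d/(K·E), for all t ∈ [t_i, t_i + T_s*] one has ḣ(x(t), k_T(x_i)) ≥ −α'(h(x(t))). Consequently, if h(x(t_i)) ≥ 0 and sampling occurs at least every T_s*, then h(x(t)) ≥ 0 for all t ≥ t_i (the set C is forward invariant). -/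
/-- **Violation-free sampling time (Theorem 1).** If along sample-and-hold trajectories
`ḣ(x,k_T(xᵢ)) ≥ -α'(h(x)) + d - K‖e(t)‖` with `‖e(t)‖ ≤ E(t - tᵢ)`, then with
`T_s* = d/(K·E)` the barrier condition `ḣ ≥ -α'(h)` holds on every sampling interval;
consequently, sampling at least every `T_s*` renders `C = {h ≥ 0}` forward invariant. -/
theorem violation_free_sampling_time {n : ℕ}
    (h : EuclideanSpace ℝ (Fin n) → ℝ)
    (x : ℝ → EuclideanSpace ℝ (Fin n)) (hdot : ℝ → ℝ)
    (α' : ℝ → ℝ) (hlip : LocallyLipschitz α') (hmono : StrictMono α') (hα0 : α' 0 = 0)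
    (K Eb d : ℝ) (hK : 0 < K) (hEb : 0 < Eb) (hd : 0 < d)
    (t0 : ℝ) (samp : ℕ → ℝ) (hs0 : samp 0 = t0) (hsmono : StrictMono samp)
    (hgap : ∀ i, samp (i+1) ≤ samp i + d / (K * Eb))
    (hunbdd : ∀ T : ℝ, ∃ i, T ≤ samp i)
    (hderiv : ∀ i, ∀ t ∈ Set.Icc (samp i) (samp (i+1)),
      HasDerivAt (fun s => h (x s)) (hdot t) t)
    (hineq : ∀ i, ∀ t ∈ Set.Icc (samp i) (samp (i+1)),
      hdot t ≥ -α' (h (x t)) + d - K * ‖x (samp i) - x t‖)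
    (herr : ∀ i, ∀ t ∈ Set.Icc (samp i) (samp (i+1)),
      ‖x (samp i) - x t‖ ≤ Eb * (t - samp i)) :
    (∀ i, ∀ t ∈ Set.Icc (samp i) (samp (i+1)), hdot t ≥ -α' (h (x t))) ∧
    (0 ≤ h (x t0) → ∀ t, t0 ≤ t → 0 ≤ h (x t)) := by
  classical
  have hKE : 0 < K * Eb := mul_pos hK hEb
  have part1 : ∀ i, ∀ t ∈ Set.Icc (samp i) (samp (i+1)), hdot t ≥ -α' (h (x t)) := by
    intro i t ht
    have h1 := hineq i t ht
    have h2 := herr i t ht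
    have h3 : t - samp i ≤ d / (K * Eb) := by
      have hg := hgap i
      have := ht.2
      linarith
    have h4 : K * ‖x (samp i) - x t‖ ≤ d := by
      have hb : K * ‖x (samp i) - x t‖ ≤ K * (Eb * (t - samp i)) :=
        mul_le_mul_of_nonneg_left h2 hK.le
      have hc : K * (Eb * (t - samp i)) ≤ K * (Eb * (d / (K * Eb))) :=
        mul_le_mul_of_nonneg_left (mul_le_mul_of_nonneg_left h3 hEb.le) hK.le
      have hk : K * (Eb * (d / (K * Eb))) = d := by
        field_simp
      linarith
    linarith
  refine ⟨part1, ?_⟩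
  intro h0 t1 ht1
  -- every `t ≥ t0` lies in some sampling interval
  have cover : ∀ t, t0 ≤ t → ∃ i, t ∈ Set.Icc (samp i) (samp (i+1)) := by
    intro t ht
    have hne : ∃ j, t ≤ samp j := hunbdd t
    have hNle : t ≤ samp (Nat.find hne) := Nat.find_spec hne
    rcases Nat.eq_zero_or_pos (Nat.find hne) with h0' | hpos
    · refine ⟨0, ?_, ?_⟩
      · rw [hs0]; exact ht
      · rw [h0'] at hNle
        exact hNle.trans (hsmono (by norm_num)).le
    · obtain ⟨m, hm⟩ := Nat.exists_eq_succ_of_ne_zero hpos.ne'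
      refine ⟨m, ?_, ?_⟩
      · have hmin := Nat.find_min hne (m := m) (by omega)
        push_neg at hmin
        exact hmin.le
      · rw [hm] at hNle
        exact hNle
  set F : ℝ → ℝ := fun s => h (x s) with hF
  have hFderiv : ∀ t, t0 ≤ t → HasDerivAt F (hdot t) t := by
    intro t ht
    obtain ⟨i, hi⟩ := cover t ht
    exact hderiv i t hi
  have hFcont : ∀ t, t0 ≤ t → ContinuousAt F t := fun t ht => (hFderiv t ht).continuousAt
  have hdn : ∀ t, t0 ≤ t → F t ≤ 0 → 0 ≤ hdot t := by
    intro t ht hFt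
    obtain ⟨i, hi⟩ := cover t ht
    have := part1 i t hi
    have hα : α' (F t) ≤ 0 := by
      rw [← hα0]
      exact hmono.monotone hFt
    linarith
  by_contra hc
  push_neg at hc
  -- `S` : points in `[t0, t1]` where the barrier is still nonnegative
  set S : Set ℝ := {u | u ∈ Set.Icc t0 t1 ∧ 0 ≤ F u} with hS
  have hSne : S.Nonempty := ⟨t0, ⟨le_refl _, ht1⟩, h0⟩
  have hSbdd : BddAbove S := ⟨t1, fun u hu => hu.1.2⟩
  have hScl : IsClosed S := by
    have : S = Set.Icc t0 t1 ∩ F ⁻¹' Set.Ici 0 := by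
      ext u; simp [hS, Set.mem_Icc, and_assoc]
    rw [this]
    apply ContinuousOn.preimage_isClosed_of_isClosed _ isClosed_Icc isClosed_Ici
    intro u hu
    exact (hFcont u hu.1).continuousWithinAt
  have hsmem : sSup S ∈ S := hScl.csSup_mem hSne hSbdd
  set s := sSup S with hs
  have hst0 : t0 ≤ s := hsmem.1.1
  have hst1 : s ≤ t1 := hsmem.1.2
  have hFs : 0 ≤ F s := hsmem.2
  have hslt : s < t1 := by
    rcases lt_or_eq_of_le hst1 with h' | h'
    · exact h'
    · exact absurd (h' ▸ hFs) (not_le.mpr hc)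
  have hneg : ∀ u, u ∈ Set.Ioc s t1 → F u < 0 := by
    intro u hu
    by_contra hcu
    push_neg at hcu
    have : u ∈ S := ⟨⟨hst0.trans hu.1.le, hu.2⟩, hcu⟩
    exact absurd (le_csSup hSbdd this) (not_le.mpr hu.1)
  -- `F s ≤ 0` by right continuity, hence `F s = 0`
  have hFs0 : F s = 0 := by
    have htend : Filter.Tendsto F (nhdsWithin s (Set.Ioi s)) (nhds (F s)) :=
      ((hFcont s hst0).tendsto).mono_left nhdsWithin_le_nhds
    have hev : ∀ᶠ u in nhdsWithin s (Set.Ioi s), F u ≤ 0 := by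
      have h1 : ∀ᶠ u in nhdsWithin s (Set.Ioi s), u < t1 :=
        eventually_nhdsWithin_of_eventually_nhds (Filter.Tendsto.eventually_lt_const hslt Filter.tendsto_id)
      filter_upwards [h1, self_mem_nhdsWithin] with u hu1 hu2
      exact (hneg u ⟨hu2, hu1.le⟩).le
    have := le_of_tendsto htend hev
    linarith
  -- `F` is monotone on `[s, t1]` since its derivative is nonnegative there
  have hFle : ∀ u ∈ Set.Icc s t1, F u ≤ 0 := by
    intro u hu
    rcases eq_or_lt_of_le hu.1 with h' | h'
    · rw [← h', hFs0]
    · exact (hneg u ⟨h', hu.2⟩).le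
  have hmonoF : MonotoneOn F (Set.Icc s t1) := by
    apply monotoneOn_of_deriv_nonneg (convex_Icc s t1)
    · intro u hu
      exact (hFcont u (hst0.trans hu.1)).continuousWithinAt
    · intro u hu
      rw [interior_Icc] at hu
      exact (hFderiv u (hst0.trans hu.1.le)).differentiableAt.differentiableWithinAt
    · intro u hu
      rw [interior_Icc] at hu
      rw [(hFderiv u (hst0.trans hu.1.le)).deriv]
      exact hdn u (hst0.trans hu.1.le) (hFle u ⟨hu.1.le, hu.2.le⟩)
  have : F s ≤ F t1 := hmonoF ⟨le_refl _, hslt.le⟩ ⟨hslt.le, le_refl _⟩ hslt.le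
  rw [hFs0] at this
  exact absurd this (not_le.mpr hc)
end

section
/- (Event-triggered safety) Suppose h(x(t_0)) ≥ 0 and for each i, on [t_i, t_{i+1}) the held controller satisfies ḣ(x(t), k_T(x(t_i))) ≥ −α'(h(x(t))) (guaranteed by the trigger law t_{i+1} = min{t ≥ t_i : ḣ + α'(h) ≤ 0} together with continuity), and the inter-event times are bounded below by T_s* > 0. Then h(x(t)) ≥ 0 for all t ≥ t_0, i.e., C is forward invariant under the event-triggered implementation. -/
/-- **Event-triggered safety (Theorem 2).** If `h(x(t₀)) ≥ 0`, on each inter-event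
interval `[tᵢ, t_{i+1})` the held controller satisfies `ḣ ≥ -α'(h(x(t)))`, and
inter-event times are bounded below by `T_s* > 0`, then `h(x(t)) ≥ 0` for all `t ≥ t₀`:
the set `C` is forward invariant under the event-triggered implementation. -/
theorem event_triggered_safety {n : ℕ}
    (h : EuclideanSpace ℝ (Fin n) → ℝ)
    (x : ℝ → EuclideanSpace ℝ (Fin n)) (hdot : ℝ → ℝ)
    (α' : ℝ → ℝ) (hlip : LocallyLipschitz α') (hmono : StrictMono α') (hα0 : α' 0 = 0)
    (Ts : ℝ) (hTs : 0 < Ts) (t0 : ℝ) (ts : ℕ → ℝ) (h0 : ts 0 = t0)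
    (htsmono : StrictMono ts) (hgap : ∀ i, Ts ≤ ts (i+1) - ts i)
    (hcont : Continuous fun s => h (x s))
    (hderiv : ∀ i, ∀ t ∈ Set.Ico (ts i) (ts (i+1)),
      HasDerivAt (fun s => h (x s)) (hdot t) t)
    (hineq : ∀ i, ∀ t ∈ Set.Ico (ts i) (ts (i+1)), hdot t ≥ -α' (h (x t)))
    (hx0 : 0 ≤ h (x t0)) :
    ∀ t, t0 ≤ t → 0 ≤ h (x t) := by
  set y : ℝ → ℝ := fun s => h (x s) with hy
  -- Key lemma on a single inter-event interval
  have key : ∀ i, 0 ≤ y (ts i) → ∀ t ∈ Set.Icc (ts i) (ts (i+1)), 0 ≤ y t := by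
    intro i hyi
    have hab : ts i < ts (i+1) := htsmono (Nat.lt_succ_self i)
    have hIco : ∀ t ∈ Set.Ico (ts i) (ts (i+1)), 0 ≤ y t := by
      intro t1 ht1
      by_contra hneg
      push_neg at hneg
      set S := {t ∈ Set.Icc (ts i) t1 | 0 ≤ y t} with hS
      have hSne : (ts i) ∈ S := ⟨⟨le_refl _, ht1.1⟩, hyi⟩
      have hSbdd : BddAbove S := ⟨t1, fun t ht => ht.1.2⟩
      set c := sSup S with hc
      have hcS : c ∈ Set.Icc (ts i) t1 :=
        ⟨le_csSup hSbdd hSne, csSup_le ⟨_, hSne⟩ (fun t ht => ht.1.2)⟩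
      have hyc : 0 ≤ y c := by
        have hclosed : IsClosed {t | 0 ≤ y t} := isClosed_le continuous_const hcont
        have h1 : c ∈ closure S := csSup_mem_closure ⟨_, hSne⟩ hSbdd
        have h2 : closure S ⊆ closure {t | 0 ≤ y t} :=
          closure_mono (fun t ht => ht.2)
        exact hclosed.closure_subset (h2 h1)
      have hct1 : c < t1 :=
        lt_of_le_of_ne hcS.2 (fun hcq => absurd (hcq ▸ hyc) (not_le.mpr hneg))
      have hnegOn : ∀ t ∈ Set.Ioc c t1, y t < 0 := by
        intro t ht
        by_contra hpos
        push_neg at hpos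
        have : t ∈ S := ⟨⟨hcS.1.trans ht.1.le, ht.2⟩, hpos⟩
        exact absurd (le_csSup hSbdd this) (not_le.mpr ht.1)
      have hmonoI : StrictMonoOn y (Set.Icc c t1) := by
        apply strictMonoOn_of_deriv_pos (convex_Icc c t1) hcont.continuousOn
        intro t ht
        rw [interior_Icc] at ht
        have htI : t ∈ Set.Ico (ts i) (ts (i+1)) :=
          ⟨hcS.1.trans ht.1.le, ht.2.trans ht1.2⟩
        have hd := (hderiv i t htI).deriv
        rw [hd]
        have hyt : y t < 0 := hnegOn t ⟨ht.1, ht.2.le⟩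
        have hαneg : α' (y t) < 0 := hα0 ▸ hmono hyt
        have := hineq i t htI
        linarith
      have := hmonoI (Set.left_mem_Icc.mpr hct1.le) (Set.right_mem_Icc.mpr hct1.le) hct1
      linarith
    intro t ht
    have hsub : Set.Icc (ts i) (ts (i+1)) ⊆ {t | 0 ≤ y t} := by
      rw [← closure_Ico hab.ne]
      exact (isClosed_le continuous_const hcont).closure_subset_iff.mpr
        (fun t ht => hIco t ht)
    exact hsub ht
  have hts0 : ∀ i, 0 ≤ y (ts i) := by
    intro i
    induction i with
    | zero => rw [h0]; exact hx0
    | succ m ih => exact key m ih _ (Set.right_mem_Icc.mpr (htsmono (Nat.lt_succ_self m)).le)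
  have hgrow : ∀ i : ℕ, t0 + i * Ts ≤ ts i := by
    intro i
    induction i with
    | zero => simp [h0]
    | succ m ih =>
      have := hgap m
      push_cast
      push_cast at ih
      linarith
  intro t ht
  obtain ⟨m, hm⟩ := Archimedean.arch (t - t0) hTs
  have hex : ∃ i, t < ts (i+1) := by
    refine ⟨m, ?_⟩
    have hg := hgrow (m+1)
    push_cast at hg
    have hm' : t - t0 ≤ m * Ts := by simpa [nsmul_eq_mul] using hm
    linarith
  have hlt : t < ts (Nat.find hex + 1) := Nat.find_spec hex
  have hle : ts (Nat.find hex) ≤ t := by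
    rcases Nat.eq_zero_or_pos (Nat.find hex) with h1 | h1
    · rw [h1, h0]; exact ht
    · obtain ⟨j, hj⟩ := Nat.exists_eq_succ_of_ne_zero h1.ne'
      have hmin := Nat.find_min hex (m := j) (by omega)
      push_neg at hmin
      rw [hj]; exact hmin
  exact key _ (hts0 _) t ⟨hle, hlt.le⟩
end
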